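/- Let X = {(x, y) ∈ ℝ² : x ∈ (0,1], y = sin(1/x)} be the (open-ended) topologist's sine curve without the limit segment, and let f : X → ℝ be the height function f(x, y) = y. Then there exist real numbers u < v (for instance u = 0 and v = 1/2) such that the image of the homomorphism H₀(X_{f ≤ u}) → H₀(X_{f ≤ v}) induced in singular homology (with integer coefficients) by the inclusion of sublevel sets X_{f ≤ u} ↪ X_{f ≤ v} is NOT a finitely generated abelian group; i.e. the 0-th rank invariant of (X, f) is not finite. -/

import Mathlib

open CategoryTheory

/-- The singular chain complex of a topological space, with `ℤ` coefficients:
the alternating face map complex of the free simplicial abelian group on the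
singular simplicial set. -/
noncomputable def singularChainComplex : TopCat.{0} ⥤ ChainComplex AddCommGrpCat.{0} ℕ :=
  TopCat.toSSet ⋙ ((SimplicialObject.whiskering _ _).obj AddCommGrpCat.free) ⋙
    (AlgebraicTopology.alternatingFaceMapComplex _)

/-- Singular homology with integer coefficients, indexed by `q : ℤ`
(it vanishes in negative degrees): the `ℕ`-indexed singular chain complex is
extended to a `ℤ`-indexed (cohomologically graded) complex, where the chain
degree `q` sits in cohomological degree `-q`. -/
noncomputable def singularHomology (q : ℤ) : TopCat.{0} ⥤ AddCommGrpCat.{0} :=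
  singularChainComplex ⋙
    (ComplexShape.embeddingDownNat.extendFunctor AddCommGrpCat) ⋙
    HomologicalComplex.homologyFunctor _ _ (-q)

/-- `V` is contractible within `U`: the inclusion `V ↪ U` is homotopic, as a map
of subspaces, to a constant map. -/
def ContractibleIn {Y : Type*} [TopologicalSpace Y] (V U : Set Y) : Prop :=
  ∃ (h : V ⊆ U) (p : U),
    ContinuousMap.Homotopic ⟨Set.inclusion h, continuous_inclusion h⟩
      (ContinuousMap.const V p)

/-- A space is locally contractible if every neighborhood of a point contains a
neighborhood that is contractible within it. -/
def LocallyContractible (Y : Type*) [TopologicalSpace Y] : Prop :=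
  ∀ x : Y, ∀ U ∈ nhds x, ∃ V ∈ nhds x, V ⊆ U ∧ ContractibleIn V U

/-- The topologist's sine curve without the limit segment:
`{(x, sin(1/x)) : x ∈ (0,1]}`. -/
def topologistSineCurve : Set (ℝ × ℝ) :=
  {p | p.1 ∈ Set.Ioc (0 : ℝ) 1 ∧ p.2 = Real.sin (1 / p.1)}

/-!
Along a sublevel set `y ≤ v` with `v < 1` the peaks `sin (1 / x) = 1` are missing, so each path
component stays between two consecutive peaks; the branch number `⌊(1 / x - π / 2) / (2 π)⌋` is
therefore constant on path components. The troughs `y = -1` lie in `X_{y ≤ 0}` and have pairwise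
different branch numbers, so they map to infinitely many path components of `X_{y ≤ 1/2}`. Since
`H₀` maps onto the free abelian group on path components, compatibly with induced maps, the image
of `H₀(X_{y ≤ 0}) → H₀(X_{y ≤ 1/2})` maps onto a subgroup containing infinitely many basis
vectors, so it is not finitely generated.
-/

universe u

@[to_additive]
theorem Subgroup.FG.map {G G' : Type*} [Group G] [Group G'] {P : Subgroup G} (h : P.FG)
    (f : G →* G') : (P.map f).FG := by
  classical
  obtain ⟨S, rfl⟩ := h
  exact ⟨S.image f, by rw [Finset.coe_image, MonoidHom.map_closure]⟩

theorem FreeAbelianGroup.not_fg_of_forall_of_mem {X : Type*} {A : Set X} (hA : A.Infinite)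
    {T : AddSubgroup (FreeAbelianGroup X)} (hT : ∀ a ∈ A, of a ∈ T) : ¬ T.FG := by
  classical
  rintro ⟨S, rfl⟩
  obtain ⟨a, haA, ha⟩ := (hA.sdiff (S.biUnion support).finite_toSet).nonempty
  have hS : AddSubgroup.closure (S : Set (FreeAbelianGroup X)) ≤ (coeff a).ker := by
    rw [AddSubgroup.closure_le]
    exact fun g hg => (notMem_support_iff a g).1 fun h => ha (Finset.mem_biUnion.2 ⟨g, hg, h⟩)
  exact (notMem_support_iff a (of a)).2 (hS (hT a haA)) (by simp [support_of])

namespace ChainComplex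

variable {C : Type*} [Category C] [Limits.HasZeroMorphisms C]

noncomputable def homologyπ₀ (K : ChainComplex C ℕ) [K.HasHomology 0] : K.X 0 ⟶ K.homology 0 :=
  K.liftCycles (𝟙 _) 0 (by simp) (by simp) ≫ K.homologyπ 0

noncomputable def homologyDesc₀ (K : ChainComplex C ℕ) [K.HasHomology 0] {A : C}
    (φ : K.X 0 ⟶ A) (hφ : K.d 1 0 ≫ φ = 0) : K.homology 0 ⟶ A :=
  K.homologyι 0 ≫ K.descOpcycles φ 1 (by simp) hφ

lemma homologyπ₀_homologyDesc₀ (K : ChainComplex C ℕ) [K.HasHomology 0] {A : C}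
    (φ : K.X 0 ⟶ A) (hφ : K.d 1 0 ≫ φ = 0) : K.homologyπ₀ ≫ K.homologyDesc₀ φ hφ = φ := by
  simp [homologyπ₀, homologyDesc₀]

lemma homologyπ₀_naturality {K L : ChainComplex C ℕ} [K.HasHomology 0] [L.HasHomology 0]
    (f : K ⟶ L) :
    f.f 0 ≫ L.homologyπ₀ = K.homologyπ₀ ≫ HomologicalComplex.homologyMap f 0 := by
  simp [homologyπ₀, HomologicalComplex.comp_liftCycles_assoc]

end ChainComplex

open AlgebraicTopology in
lemma SSet.freeComplex_d_one_zero_comp_π₀ (X : SSet.{u}) :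
    ((alternatingFaceMapComplex _).obj
        (((SimplicialObject.whiskering _ _).obj AddCommGrpCat.free).obj X)).d 1 0 ≫
      AddCommGrpCat.free.map (TypeCat.ofHom π₀.mk) = 0 := by
  change (∑ i : Fin 2, (-1 : ℤ) ^ (i : ℕ) • AddCommGrpCat.free.map (X.δ i)) ≫ _ = 0
  simp only [Fin.sum_univ_two, Fin.val_zero, Fin.val_one, pow_zero, pow_one, one_smul, neg_smul,
    Preadditive.add_comp, Preadditive.neg_comp, ← Functor.map_comp, add_neg_eq_zero]
  exact congrArg AddCommGrpCat.free.map X.coforkπ₀.condition.symm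

namespace TopCat

noncomputable def singularHomologyZeroIso (Y : TopCat.{0}) :
    (singularHomology 0).obj Y ≅ (singularChainComplex.obj Y).homology 0 :=
  (singularChainComplex.obj Y).extendHomologyIso _ (rfl : ComplexShape.embeddingDownNat.f 0 = -0)

lemma singularHomology_zero_map_comp_iso_hom {Y Z : TopCat.{0}} (f : Y ⟶ Z) :
    (singularHomology 0).map f ≫ (singularHomologyZeroIso Z).hom =
      (singularHomologyZeroIso Y).hom ≫
        HomologicalComplex.homologyMap (singularChainComplex.map f) 0 :=
  HomologicalComplex.extendHomologyIso_hom_naturality _ _ _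

noncomputable def singularHomologyZeroπ (Y : TopCat.{0}) :
    (singularChainComplex.obj Y).X 0 ⟶ (singularHomology 0).obj Y :=
  (singularChainComplex.obj Y).homologyπ₀ ≫ (singularHomologyZeroIso Y).inv

lemma singularHomologyZeroπ_naturality {Y Z : TopCat.{0}} (f : Y ⟶ Z) :
    (singularChainComplex.map f).f 0 ≫ singularHomologyZeroπ Z =
      singularHomologyZeroπ Y ≫ (singularHomology 0).map f := by
  rw [singularHomologyZeroπ, singularHomologyZeroπ, ← Category.assoc,
    ChainComplex.homologyπ₀_naturality, Category.assoc, Category.assoc]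
  congr 1
  rw [Iso.comp_inv_eq, Category.assoc, singularHomology_zero_map_comp_iso_hom,
    Iso.inv_hom_id_assoc]

noncomputable def singularChainZeroToπ₀ (Y : TopCat.{0}) :
    (singularChainComplex.obj Y).X 0 ⟶ AddCommGrpCat.free.obj (toSSet.obj Y).π₀ :=
  AddCommGrpCat.free.map (TypeCat.ofHom SSet.π₀.mk)

lemma singularChainComplex_d_one_zero_comp_toπ₀ (Y : TopCat.{0}) :
    (singularChainComplex.obj Y).d 1 0 ≫ singularChainZeroToπ₀ Y = 0 :=
  SSet.freeComplex_d_one_zero_comp_π₀ _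

noncomputable def singularHomologyZeroToπ₀ (Y : TopCat.{0}) :
    (singularHomology 0).obj Y ⟶ AddCommGrpCat.free.obj (toSSet.obj Y).π₀ :=
  (singularHomologyZeroIso Y).hom ≫ (singularChainComplex.obj Y).homologyDesc₀
    (singularChainZeroToπ₀ Y) (singularChainComplex_d_one_zero_comp_toπ₀ Y)

lemma singularHomologyZeroπ_toπ₀ (Y : TopCat.{0}) :
    singularHomologyZeroπ Y ≫ singularHomologyZeroToπ₀ Y = singularChainZeroToπ₀ Y := by
  rw [singularHomologyZeroπ, singularHomologyZeroToπ₀, Category.assoc, Iso.inv_hom_id_assoc,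
    ChainComplex.homologyπ₀_homologyDesc₀]

lemma singularHomologyZeroToπ₀_map_singularHomologyZeroπ_of {Y Z : TopCat.{0}} (f : Y ⟶ Z)
    (y : Y) :
    singularHomologyZeroToπ₀ Z ((singularHomology 0).map f
        (singularHomologyZeroπ Y (.of (toSSetObj₀Equiv.symm y)))) =
      .of (zerothHomotopyEquiv (.mk (f y))) := by
  have h := congrArg (· ≫ singularHomologyZeroToπ₀ Z) (singularHomologyZeroπ_naturality f)
  simp only [Category.assoc, singularHomologyZeroπ_toπ₀] at h
  exact (ConcreteCategory.congr_hom h _).symm.trans (FreeAbelianGroup.map_of_apply _)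

theorem not_fg_range_singularHomology_zero_map {Y Z : TopCat.{0}} (f : Y ⟶ Z)
    (hf : (Set.range fun y => ZerothHomotopy.mk (f y)).Infinite) :
    ¬ (AddMonoidHom.range ((singularHomology 0).map f).hom).FG := by
  intro hfg
  refine FreeAbelianGroup.not_fg_of_forall_of_mem (hf.image zerothHomotopyEquiv.injective.injOn)
    ?_ (hfg.map (singularHomologyZeroToπ₀ Z).hom)
  rintro _ ⟨_, ⟨y, rfl⟩, rfl⟩
  exact ⟨_, ⟨_, rfl⟩, singularHomologyZeroToπ₀_map_singularHomologyZeroπ_of f y⟩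

end TopCat

theorem Joined.floor_eq_floor {Y : Type*} [TopologicalSpace Y] {g : Y → ℝ} (hg : Continuous g)
    (hg_int : ∀ y (m : ℤ), g y ≠ m) {x y : Y} (h : Joined x y) : ⌊g x⌋ = ⌊g y⌋ := by
  suffices key : ∀ {x y : Y}, Joined x y → ⌊g x⌋ ≤ ⌊g y⌋ from le_antisymm (key h) (key h.symm)
  intro x y h
  by_contra! hlt
  let γ := h.somePath
  have hIcc : Set.Icc (g y) (g x) ⊆ Set.range (g ∘ γ) :=
    (isPreconnected_range (hg.comp γ.continuous)).Icc_subset ⟨1, by simp⟩ ⟨0, by simp⟩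
  obtain ⟨t, ht⟩ := hIcc ⟨(Int.floor_lt.1 hlt).le, Int.floor_le _⟩
  exact hg_int _ _ ht

section SineCurve

open Real

/-- Reparametrizes `1 / x` so that the peaks `sin (1 / x) = 1` sit at the integers. -/
noncomputable def sineBranch (p : ℝ × ℝ) : ℝ := (1 / p.1 - π / 2) / (2 * π)

lemma continuousOn_sineBranch : ContinuousOn sineBranch {p | p.1 ≠ 0} :=
  ((continuousOn_const.div continuous_fst.continuousOn fun _ hp => hp).sub
    continuousOn_const).div_const _

lemma sineBranch_ne_intCast {p : ℝ × ℝ} (hp : p ∈ topologistSineCurve) (hp1 : p.2 < 1) (m : ℤ) :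
    sineBranch p ≠ m := by
  intro h
  have hx : 1 / p.1 = π / 2 + m * (2 * π) := by
    rw [sineBranch, div_eq_iff (by positivity)] at h
    linarith
  rw [hp.2, hx, sin_add_int_mul_two_pi, sin_pi_div_two] at hp1
  exact lt_irrefl _ hp1

lemma floor_sineBranch_eq_of_joined {v : ℝ} (hv : v < 1)
    {p q : {p : topologistSineCurve | (p : ℝ × ℝ).2 ≤ v}} (h : Joined p q) :
    ⌊sineBranch p⌋ = ⌊sineBranch q⌋ := by
  refine h.floor_eq_floor ?_ fun p => sineBranch_ne_intCast p.1.2 (p.2.trans_lt hv)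
  exact continuousOn_sineBranch.comp_continuous
    (continuous_subtype_val.comp continuous_subtype_val) fun p => p.1.2.1.1.ne'

noncomputable def sineTrough (n : ℕ) : ℝ × ℝ := ((3 * π / 2 + 2 * π * n)⁻¹, -1)

lemma sineTrough_mem (n : ℕ) : sineTrough n ∈ topologistSineCurve := by
  have hge : 1 ≤ 3 * π / 2 + 2 * π * n := by
    have := pi_gt_three
    have : 0 ≤ 2 * π * n := by positivity
    linarith
  refine ⟨⟨inv_pos.2 (by linarith), inv_le_one_of_one_le₀ hge⟩, ?_⟩
  have harg : 3 * π / 2 + 2 * π * n = π / 2 + π + n * (2 * π) := by ring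
  simp only [sineTrough, one_div, inv_inv]
  rw [harg, sin_add_nat_mul_two_pi, sin_add_pi, sin_pi_div_two]

lemma floor_sineBranch_sineTrough (n : ℕ) : ⌊sineBranch (sineTrough n)⌋ = n := by
  have : sineBranch (sineTrough n) = n + 1 / 2 := by
    simp only [sineBranch, sineTrough, one_div, inv_inv]
    field_simp
    ring
  rw [this, Int.floor_eq_iff]
  push_cast
  constructor <;> linarith

end SineCurve

/-- For the (open-ended) topologist's sine curve filtered by the height function
`f(x,y) = y`, there are `u < v` such that the image of
`H₀(X_{f ≤ u}) → H₀(X_{f ≤ v})` induced by the inclusion of sublevel sets is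
not finitely generated: the 0-th rank invariant is not finite. -/
theorem topologistSineCurve_rank_invariant_not_finite :
    ∃ (u v : ℝ) (huv : u < v),
      ¬ (AddMonoidHom.range ((singularHomology 0).map
        (show TopCat.of {p : topologistSineCurve | (p : ℝ × ℝ).2 ≤ u} ⟶
              TopCat.of {p : topologistSineCurve | (p : ℝ × ℝ).2 ≤ v} from
          TopCat.ofHom ⟨Set.inclusion (fun p hp => le_trans hp huv.le),
           continuous_inclusion _⟩)).hom).FG := by
  refine ⟨0, 1 / 2, by norm_num, TopCat.not_fg_range_singularHomology_zero_map _ ?_⟩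
  let trough (n : ℕ) : {p : topologistSineCurve | (p : ℝ × ℝ).2 ≤ 0} :=
    ⟨⟨sineTrough n, sineTrough_mem n⟩, by norm_num [sineTrough]⟩
  refine Set.infinite_of_injective_forall_mem (fun n m h => ?_) fun n => ⟨trough n, rfl⟩
  have h_floor : (n : ℤ) = m := by
    rw [← floor_sineBranch_sineTrough, ← floor_sineBranch_sineTrough]
    exact floor_sineBranch_eq_of_joined (by norm_num) (Quotient.exact h)
  exact_mod_cast h_floor
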